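/- arXiv:1912.03912 — 5 statements merged into one kernel-verified Lean document; each statement's English description precedes it below -/
import Mathlib

section
/- Let m and n be relatively prime positive integers and fix indices 1 ≤ i ≤ m and 1 ≤ j ≤ n. Then for any k, t ∈ {0, 1, …, mn−1} with k ≠ t, the matrices (C_m)^k · E_{ij} · (C_n)^{mn−k−1} and (C_m)^t · E_{ij} · (C_n)^{mn−t−1} are distinct (each having exactly one nonzero entry). -/
/-- A matrix over ℕ is a 0-1 matrix iff all its entries are at most 1. -/
def IsZO {α β : Type*} (A : Matrix α β ℕ) : Prop := ∀ i j, A i j ≤ 1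

/-- The stable index of a 0-1 matrix: the smallest positive `k` with `A ^ (k+1)`
not a 0-1 matrix, or `⊤` if no such `k` exists. -/
noncomputable def theta {α : Type*} [Fintype α] [DecidableEq α]
    (A : Matrix α α ℕ) : ℕ∞ :=
  sInf ((fun k : ℕ => (k : ℕ∞)) '' {k : ℕ | 1 ≤ k ∧ ¬ IsZO (A ^ (k + 1))})

/-- `g(n)` from the paper. -/
def g (n : ℕ) : ℕ :=
  if n % 2 = 1 then (n ^ 2 - 1) / 4
  else if n % 4 = 0 then (n ^ 2 - 4) / 4
  else (n ^ 2 - 16) / 4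

/-- Basic circulant 0-1 matrix of order `n`. -/
def Cmat (n : ℕ) : Matrix (Fin n) (Fin n) ℕ :=
  Matrix.of fun i j => if (j : ℕ) = ((i : ℕ) + 1) % n then 1 else 0

/-- Condition (★) on `(n, p, q)`. -/
def StarCond (n p q : ℕ) : Prop :=
  p + q = n ∧
  ((n % 2 = 1 ∧ ({p, q} : Finset ℕ) = {(n + 1) / 2, (n - 1) / 2}) ∨
   (n % 4 = 0 ∧ ({p, q} : Finset ℕ) = {(n + 2) / 2, (n - 2) / 2}) ∨
   (n % 4 = 2 ∧ ({p, q} : Finset ℕ) = {(n + 4) / 2, (n - 4) / 2}))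


lemma cmat_pow_apply {n : ℕ} (hn : 0 < n) (s : ℕ) (a b : Fin n) :
    (Cmat n ^ s) a b = if (b : ℕ) = ((a : ℕ) + s) % n then 1 else 0 := by
  induction s generalizing b with
  | zero =>
    simp [Matrix.one_apply, Nat.mod_eq_of_lt a.isLt, Fin.ext_iff, eq_comm]
  | succ s ih =>
    rw [pow_succ, Matrix.mul_apply]
    rw [Finset.sum_eq_single (⟨((a : ℕ) + s) % n, Nat.mod_lt _ hn⟩ : Fin n)]
    · rw [ih]
      simp only [Cmat, Matrix.of_apply]
      simp [Nat.mod_add_mod, ← Nat.add_assoc]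
    · intro c _ hc
      rw [ih, if_neg, zero_mul]
      intro hce
      exact hc (Fin.ext hce)
    · intro habs; exact absurd (Finset.mem_univ _) habs

lemma entry_apply {m n : ℕ} (hm : 0 < m) (hn : 0 < n) (i : Fin m) (j : Fin n)
    (s r : ℕ) (a : Fin m) (b : Fin n) :
    (((Cmat m) ^ s * Matrix.single i j 1 : Matrix (Fin m) (Fin n) ℕ) *
      (Cmat n) ^ r) a b =
    if ((i : ℕ) = ((a : ℕ) + s) % m ∧ (b : ℕ) = ((j : ℕ) + r) % n) then 1 else 0 := by
  have h1 : ((Cmat m) ^ s * Matrix.single i j 1 : Matrix (Fin m) (Fin n) ℕ) a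
      = fun d => (Cmat m ^ s) a i * (if d = j then 1 else 0) := by
    funext d
    rw [Matrix.mul_apply]
    rw [Finset.sum_eq_single i]
    · simp [Matrix.single, eq_comm]
    · intro c _ hc
      simp [Matrix.single, Ne.symm hc]
    · intro habs; exact absurd (Finset.mem_univ _) habs
  rw [Matrix.mul_apply]
  simp only [h1]
  rw [Finset.sum_eq_single j]
  · rw [if_pos rfl, mul_one, cmat_pow_apply hm, cmat_pow_apply hn]
    by_cases h1 : (i : ℕ) = ((a : ℕ) + s) % m <;>
      by_cases h2 : (b : ℕ) = ((j : ℕ) + r) % n <;> simp [h1, h2]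
  · intro c _ hc
    simp [hc]
  · intro habs; exact absurd (Finset.mem_univ _) habs

lemma a0_spec {m : ℕ} (hm : 0 < m) (i : Fin m) (s : ℕ) :
    (i : ℕ) = ((((i : ℕ) + (m - s % m)) % m : ℕ) + s) % m := by
  rw [Nat.mod_add_mod]
  have h1 : s % m < m := Nat.mod_lt _ hm
  have h2 : m * (s / m) + s % m = s := Nat.div_add_mod s m
  have h4 : m * (s / m + 1) = m * (s / m) + m := by ring
  have h3 : (i : ℕ) + (m - s % m) + s = (i : ℕ) + m * (s / m + 1) := by omega
  rw [h3, Nat.add_mul_mod_self_left, Nat.mod_eq_of_lt i.isLt]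

theorem stmt_8 (m n : ℕ) (hm : 0 < m) (hn : 0 < n) (h : Nat.Coprime m n)
    (i : Fin m) (j : Fin n) (k t : ℕ) (hk : k < m * n) (ht : t < m * n)
    (hkt : k ≠ t) :
    (∀ s : ℕ, s < m * n → ∃! ij : Fin m × Fin n,
      (((Cmat m) ^ s * Matrix.single i j 1 : Matrix (Fin m) (Fin n) ℕ) *
        (Cmat n) ^ (m * n - s - 1)) ij.1 ij.2 ≠ 0) ∧
    ((Cmat m) ^ k * Matrix.single i j 1 : Matrix (Fin m) (Fin n) ℕ) *
        (Cmat n) ^ (m * n - k - 1) ≠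
      ((Cmat m) ^ t * Matrix.single i j 1 : Matrix (Fin m) (Fin n) ℕ) *
        (Cmat n) ^ (m * n - t - 1) := by
  -- unique nonzero position for parameter s
  set A : ℕ → Fin m := fun s => ⟨((i : ℕ) + (m - s % m)) % m, Nat.mod_lt _ hm⟩ with hA
  set B : ℕ → Fin n := fun s => ⟨((j : ℕ) + (m * n - s - 1)) % n, Nat.mod_lt _ hn⟩ with hB
  have hcondA : ∀ s, (i : ℕ) = ((A s : ℕ) + s) % m := fun s => a0_spec hm i s
  have hcondB : ∀ s, ((B s : ℕ)) = ((j : ℕ) + (m * n - s - 1)) % n := fun s => rfl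
  constructor
  · intro s _
    refine ⟨(A s, B s), ?_, ?_⟩
    · dsimp only
      rw [entry_apply hm hn, if_pos ⟨hcondA s, hcondB s⟩]
      exact one_ne_zero
    · rintro ⟨a, b⟩ hab
      rw [entry_apply hm hn] at hab
      by_cases hcond : (i : ℕ) = ((a : ℕ) + s) % m ∧ (b : ℕ) = ((j : ℕ) + (m * n - s - 1)) % n
      · obtain ⟨h1, h2⟩ := hcond
        have ha : a = A s := by
          have heq : ((a : ℕ) + s) % m = ((A s : ℕ) + s) % m := by
            rw [← h1, ← hcondA s]
          have := (Nat.ModEq.add_right_cancel' s heq : (a : ℕ) ≡ (A s : ℕ) [MOD m])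
          have := this
          unfold Nat.ModEq at this
          rw [Nat.mod_eq_of_lt a.isLt, Nat.mod_eq_of_lt (A s).isLt] at this
          exact Fin.ext this
        have hb : b = B s := Fin.ext (by rw [h2, hcondB s])
        simp [ha, hb]
      · exact absurd (if_neg hcond) hab
  · intro heq
    have h1 := congrFun (congrFun heq (A k)) (B k)
    rw [entry_apply hm hn, entry_apply hm hn, if_pos ⟨hcondA k, hcondB k⟩] at h1
    by_cases hcond : (i : ℕ) = ((A k : ℕ) + t) % m ∧
        ((B k : ℕ)) = ((j : ℕ) + (m * n - t - 1)) % n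
    · obtain ⟨hc1, hc2⟩ := hcond
      -- k ≡ t [MOD m]
      have hmm : k ≡ t [MOD m] := by
        have : ((A k : ℕ) + k) % m = ((A k : ℕ) + t) % m := by rw [← hcondA k, hc1]
        exact Nat.ModEq.add_left_cancel' _ this
      -- k ≡ t [MOD n]
      have hnn : k ≡ t [MOD n] := by
        have h2 : ((j : ℕ) + (m * n - k - 1)) % n = ((j : ℕ) + (m * n - t - 1)) % n := by
          rw [← hcondB k, hc2]
        have h3 : (m * n - k - 1) ≡ (m * n - t - 1) [MOD n] :=
          Nat.ModEq.add_left_cancel' _ h2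
        have h4 := h3.add_right (k + t)
        have e1 : m * n - k - 1 + (k + t) = (m * n - 1) + t := by omega
        have e2 : m * n - t - 1 + (k + t) = (m * n - 1) + k := by omega
        rw [e1, e2] at h4
        exact (Nat.ModEq.add_left_cancel' _ h4).symm
      have hmul : k ≡ t [MOD m * n] :=
        (Nat.modEq_and_modEq_iff_modEq_mul h).mp ⟨hmm, hnn⟩
      unfold Nat.ModEq at hmul
      rw [Nat.mod_eq_of_lt hk, Nat.mod_eq_of_lt ht] at hmul
      exact hkt hmul
    · rw [if_neg hcond] at h1
      exact one_ne_zero h1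
end

section
/- Let n ≥ 7 and let p, q be positive integers with p + q = n. Let B be the n×n block matrix [[C_p, X],[0, C_q]] where X is a nonzero p×q 0-1 matrix. Then θ(B) = g(n) if and only if X has exactly one nonzero entry and (p,q) satisfies condition (★) for n. -/
open Fin.NatCast Fin.CommRing

section
variable {p q : ℕ} [NeZero p] [NeZero q]

lemma val_add_natCast (i : Fin p) (k : ℕ) : (i + (k : Fin p)).val = ((i : ℕ) + k) % p := by
  rw [Fin.val_add, Fin.val_natCast, Nat.add_mod_mod]

lemma eq_add_natCast_iff (i j : Fin p) (k : ℕ) :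
    j = i + (k : Fin p) ↔ (j : ℕ) = ((i : ℕ) + k) % p := by
  rw [Fin.ext_iff, val_add_natCast]

lemma Cmat_pow (k : ℕ) :
    (Cmat p) ^ k = Matrix.of (fun i j => if j = i + (k : Fin p) then 1 else 0) := by
  induction k with
  | zero =>
    ext i j
    simp [Matrix.one_apply, eq_comm]
  | succ k ih =>
    ext i j
    rw [pow_succ, Matrix.mul_apply]
    simp only [ih, Matrix.of_apply, ite_mul, one_mul, zero_mul,
      Finset.sum_ite_eq', Finset.mem_univ, if_true]
    show (if (j:ℕ) = ((i + (k:Fin p)).val + 1) % p then 1 else 0) = _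
    rw [val_add_natCast, Nat.mod_add_mod]
    have h1 : ((k : Fin p) + 1) = ((k + 1 : ℕ) : Fin p) := by push_cast; ring
    simp only [h1, eq_add_natCast_iff, Nat.add_assoc]
end

section
variable {p q : ℕ} [NeZero p] [NeZero q]

def Ymat (X : Matrix (Fin p) (Fin q) ℕ) (k : ℕ) : Matrix (Fin p) (Fin q) ℕ :=
  Matrix.of fun a b =>
    ∑ i ∈ Finset.range k, X (a + (i : Fin p)) (b + (i : Fin q) + 1 - (k : Fin q))

lemma Cmat_mul_apply (M : Matrix (Fin p) (Fin q) ℕ) (a : Fin p) (b : Fin q) :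
    (Cmat p * M) a b = M (a + ((1 : ℕ) : Fin p)) b := by
  rw [Matrix.mul_apply]
  simp only [Cmat, Matrix.of_apply, ← eq_add_natCast_iff, ite_mul, one_mul, zero_mul,
    Finset.sum_ite_eq', Finset.mem_univ, if_true]

lemma mul_Cpow_apply (M : Matrix (Fin p) (Fin q) ℕ) (k : ℕ) (a : Fin p) (b : Fin q) :
    (M * (Cmat q) ^ k) a b = M a (b - (k : Fin q)) := by
  rw [Cmat_pow, Matrix.mul_apply]
  have h : ∀ c : Fin q, (b = c + (k : Fin q)) ↔ (c = b - (k : Fin q)) := by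
    intro c
    constructor
    · intro h; rw [h]; ring
    · intro h; rw [h]; ring
  simp only [Matrix.of_apply, h, mul_ite, mul_one, mul_zero,
    Finset.sum_ite_eq', Finset.mem_univ, if_true]

lemma Bmat_pow (X : Matrix (Fin p) (Fin q) ℕ) (k : ℕ) :
    (Matrix.fromBlocks (Cmat p) X 0 (Cmat q)) ^ k =
      Matrix.fromBlocks ((Cmat p) ^ k) (Ymat X k) 0 ((Cmat q) ^ k) := by
  induction k with
  | zero =>
    have h0 : Ymat X 0 = 0 := by ext a b; simp [Ymat]
    simp [h0, Matrix.fromBlocks_one]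
  | succ k ih =>
    rw [pow_succ', ih, Matrix.fromBlocks_multiply]
    rw [Matrix.mul_zero, Matrix.zero_mul, Matrix.mul_zero, Matrix.zero_mul]
    rw [add_zero, add_zero, zero_add, ← pow_succ', ← pow_succ']
    have hTR : Cmat p * Ymat X k + X * Cmat q ^ k = Ymat X (k + 1) := by
      ext a b
      rw [Matrix.add_apply, Cmat_mul_apply, mul_Cpow_apply]
      simp only [Ymat, Matrix.of_apply]
      rw [Finset.sum_range_succ']
      congr 1
      · apply Finset.sum_congr rfl
        intro i _
        congr 1
        · push_cast; ring
        · push_cast; ring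
      · congr 1
        · push_cast; ring
        · push_cast; ring
    rw [hTR]
end

lemma sum_two (k : ℕ) (f : ℕ → ℕ) (hf : ∀ i, f i ≤ 1) :
    2 ≤ ∑ i ∈ Finset.range k, f i ↔
      ∃ i j, i < k ∧ j < k ∧ i < j ∧ f i ≠ 0 ∧ f j ≠ 0 := by
  constructor
  · intro h
    set S := (Finset.range k).filter (fun i => f i ≠ 0) with hS
    have hsum : ∑ i ∈ Finset.range k, f i = ∑ i ∈ S, f i :=
      (Finset.sum_filter_ne_zero _).symm
    have hcard : ∑ i ∈ S, f i ≤ S.card := by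
      simpa using Finset.sum_le_card_nsmul S f 1 (fun x _ => hf x)
    obtain ⟨a, ha, b, hb, hab⟩ := Finset.one_lt_card.mp (show 1 < S.card by omega)
    simp only [hS, Finset.mem_filter, Finset.mem_range] at ha hb
    rcases lt_or_gt_of_ne hab with h | h
    · exact ⟨a, b, ha.1, hb.1, h, ha.2, hb.2⟩
    · exact ⟨b, a, hb.1, ha.1, h, hb.2, ha.2⟩
  · rintro ⟨i, j, hi, hj, hij, hfi, hfj⟩
    have hsub : ({i, j} : Finset ℕ) ⊆ Finset.range k := by
      intro x hx; simp at hx; rcases hx with rfl | rfl <;> simp [hi, hj]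
    calc 2 ≤ f i + f j := by omega
    _ = ∑ x ∈ ({i, j} : Finset ℕ), f x := (Finset.sum_pair (by omega)).symm
    _ ≤ ∑ i ∈ Finset.range k, f i := Finset.sum_le_sum_of_subset hsub

section
variable {p q : ℕ} [NeZero p] [NeZero q]

def Coll (X : Matrix (Fin p) (Fin q) ℕ) (d : ℕ) : Prop :=
  ∃ (r : Fin p) (s : Fin q) (r' : Fin p) (s' : Fin q),
    X r s ≠ 0 ∧ X r' s' ≠ 0 ∧ r' = r + (d : Fin p) ∧ s' = s + (d : Fin q)

lemma not_isZO_iff (X : Matrix (Fin p) (Fin q) ℕ) (hX : IsZO X) (k : ℕ) :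
    ¬ IsZO ((Matrix.fromBlocks (Cmat p) X 0 (Cmat q)) ^ (k + 1)) ↔
      ∃ d, 1 ≤ d ∧ d ≤ k ∧ Coll X d := by
  rw [Bmat_pow]
  constructor
  · intro h
    simp only [IsZO, not_forall, not_le] at h
    obtain ⟨u, v, huv⟩ := h
    rcases u with a | a <;> rcases v with b | b
    · rw [Matrix.fromBlocks_apply₁₁, Cmat_pow] at huv
      simp only [Matrix.of_apply] at huv; split_ifs at huv <;> omega
    · rw [Matrix.fromBlocks_apply₁₂] at huv
      simp only [Ymat, Matrix.of_apply] at huv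
      have h2 := (sum_two (k+1)
        (fun i => X (a + (i : Fin p)) (b + (i : Fin q) + 1 - ((k+1 : ℕ) : Fin q)))
        (fun i => hX _ _)).mp huv
      obtain ⟨i, j, hi, hj, hij, hfi, hfj⟩ := h2
      obtain ⟨d, rfl⟩ : ∃ d, j = i + d := ⟨j - i, by omega⟩
      refine ⟨d, by omega, by omega, a + (i : Fin p), b + (i : Fin q) + 1 - ((k+1 : ℕ) : Fin q),
        a + ((i + d : ℕ) : Fin p), b + ((i + d : ℕ) : Fin q) + 1 - ((k+1 : ℕ) : Fin q),
        hfi, hfj, ?_, ?_⟩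
      · push_cast; ring
      · push_cast; ring
    · rw [Matrix.fromBlocks_apply₂₁] at huv; simp at huv
    · rw [Matrix.fromBlocks_apply₂₂, Cmat_pow] at huv
      simp only [Matrix.of_apply] at huv; split_ifs at huv <;> omega
  · rintro ⟨d, hd1, hdk, r, s, r', s', hrs, hrs', hr, hs⟩
    intro hZO
    have hle := hZO (Sum.inl r) (Sum.inr (s + (((k+1:ℕ)) : Fin q) - 1))
    rw [Matrix.fromBlocks_apply₁₂] at hle
    set b := s + (((k+1:ℕ)) : Fin q) - 1 with hb
    have h2 : 2 ≤ Ymat X (k+1) r b := by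
      simp only [Ymat, Matrix.of_apply]
      apply (sum_two (k+1) _ (fun i => hX _ _)).mpr
      refine ⟨0, d, by omega, by omega, by omega, ?_, ?_⟩
      · have e1 : r + ((0:ℕ) : Fin p) = r := by push_cast; ring
        have e2 : b + ((0:ℕ) : Fin q) + 1 - ((k+1:ℕ) : Fin q) = s := by
          rw [hb]; push_cast; ring
        rw [e1, e2]; exact hrs
      · have e1 : r + ((d:ℕ) : Fin p) = r' := hr.symm
        have e2 : b + ((d:ℕ) : Fin q) + 1 - ((k+1:ℕ) : Fin q) = s' := by
          rw [hb, hs]; push_cast; ring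
        rw [e1, e2]; exact hrs'
    omega

lemma theta_eq_sInf (X : Matrix (Fin p) (Fin q) ℕ) (hX : IsZO X)
    (hne : ∃ d, 1 ≤ d ∧ Coll X d) :
    theta (Matrix.fromBlocks (Cmat p) X 0 (Cmat q)) =
      (↑(sInf {d : ℕ | 1 ≤ d ∧ Coll X d}) : ℕ∞) := by
  set S := {d : ℕ | 1 ≤ d ∧ Coll X d} with hSdef
  have hd0 : sInf S ∈ S := Nat.sInf_mem hne
  apply le_antisymm
  · apply sInf_le
    exact ⟨sInf S, ⟨hd0.1, (not_isZO_iff X hX _).mpr ⟨sInf S, hd0.1, le_refl _, hd0.2⟩⟩, rfl⟩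
  · apply le_sInf
    rintro x ⟨m, ⟨hm1, hm2⟩, rfl⟩
    rw [not_isZO_iff X hX] at hm2
    obtain ⟨d, hdd1, hdm, hcd⟩ := hm2
    have h1 : sInf S ≤ d := Nat.sInf_le (show d ∈ S from ⟨hdd1, hcd⟩)
    show (((sInf S : ℕ)) : ℕ∞) ≤ ((m : ℕ) : ℕ∞)
    exact_mod_cast le_trans h1 hdm
end

section
variable {p q : ℕ} [NeZero p] [NeZero q]

lemma exists_one (X : Matrix (Fin p) (Fin q) ℕ) (hX0 : X ≠ 0) :
    ∃ r s, X r s ≠ 0 := by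
  by_contra h
  push_neg at h
  exact hX0 (by ext r s; simp [h r s])

lemma coll_lcm (X : Matrix (Fin p) (Fin q) ℕ) (hX0 : X ≠ 0) :
    1 ≤ Nat.lcm p q ∧ Coll X (Nat.lcm p q) := by
  obtain ⟨r, s, hrs⟩ := exists_one X hX0
  have hp := Nat.pos_of_ne_zero (NeZero.ne p)
  have hq := Nat.pos_of_ne_zero (NeZero.ne q)
  have hlcm : 0 < Nat.lcm p q := Nat.pos_of_ne_zero (Nat.lcm_ne_zero (by omega) (by omega))
  refine ⟨hlcm, r, s, r, s, hrs, hrs, ?_, ?_⟩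
  · rw [show ((Nat.lcm p q : ℕ) : Fin p) = 0 from Fin.natCast_eq_zero.mpr (Nat.dvd_lcm_left p q)]
    ring
  · rw [show ((Nat.lcm p q : ℕ) : Fin q) = 0 from Fin.natCast_eq_zero.mpr (Nat.dvd_lcm_right p q)]
    ring

lemma coll_unique_dvd (X : Matrix (Fin p) (Fin q) ℕ)
    (hu : ∃! ij : Fin p × Fin q, X ij.1 ij.2 ≠ 0) (d : ℕ) (hc : Coll X d) :
    p ∣ d ∧ q ∣ d := by
  obtain ⟨r, s, r', s', h1, h2, hr, hs⟩ := hc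
  obtain ⟨ij0, _, hun⟩ := hu
  have e1 : (r, s) = ij0 := hun (r, s) h1
  have e2 : (r', s') = ij0 := hun (r', s') h2
  have er : r' = r := by
    have := e2.trans e1.symm
    exact (Prod.mk.injEq _ _ _ _ ▸ this).1
  have es : s' = s := by
    have := e2.trans e1.symm
    exact (Prod.mk.injEq _ _ _ _ ▸ this).2
  constructor
  · apply Fin.natCast_eq_zero.mp
    have : r + (d : Fin p) = r + 0 := by rw [← hr, er, add_zero]
    exact add_left_cancel this
  · apply Fin.natCast_eq_zero.mp
    have : s + (d : Fin q) = s + 0 := by rw [← hs, es, add_zero]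
    exact add_left_cancel this

lemma coll_two (X : Matrix (Fin p) (Fin q) ℕ) (hcop : Nat.Coprime p q)
    (r : Fin p) (s : Fin q) (r' : Fin p) (s' : Fin q)
    (h1 : X r s ≠ 0) (h2 : X r' s' ≠ 0) (hne : (r, s) ≠ (r', s')) :
    ∃ d, 1 ≤ d ∧ d < p * q ∧ Coll X d := by
  have hp := Nat.pos_of_ne_zero (NeZero.ne p)
  have hq := Nat.pos_of_ne_zero (NeZero.ne q)
  set a := ((r' - r : Fin p) : ℕ) with ha
  set b := ((s' - s : Fin q) : ℕ) with hb
  obtain ⟨k, hk1, hk2⟩ := Nat.chineseRemainder hcop a b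
  refine ⟨k % (p * q), ?_, ?_, ?_⟩
  · -- positivity
    rcases Nat.eq_zero_or_pos (k % (p * q)) with h0 | h0
    · exfalso
      have hkp : k % p = 0 := by
        rw [← Nat.mod_mod_of_dvd k (dvd_mul_right p q), h0, Nat.zero_mod]
      have hkq : k % q = 0 := by
        rw [← Nat.mod_mod_of_dvd k (dvd_mul_left q p), h0, Nat.zero_mod]
      have hap : a = 0 := by
        have h := hk1.symm
        unfold Nat.ModEq at h
        rw [Nat.mod_eq_of_lt (r' - r).isLt, hkp] at h
        exact h
      have hbq : b = 0 := by
        have h := hk2.symm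
        unfold Nat.ModEq at h
        rw [Nat.mod_eq_of_lt (s' - s).isLt, hkq] at h
        exact h
      apply hne
      have hr : r' = r := by
        have : r' - r = 0 := by
          rw [Fin.ext_iff]; exact hap
        have := sub_eq_zero.mp this
        exact this
      have hs : s' = s := by
        have : s' - s = 0 := by
          rw [Fin.ext_iff]; exact hbq
        exact sub_eq_zero.mp this
      rw [hr, hs]
    · exact h0
  · exact Nat.mod_lt _ (by positivity)
  · refine ⟨r, s, r', s', h1, h2, ?_, ?_⟩
    · have : ((k % (p * q) : ℕ) : Fin p) = r' - r := by
        rw [Fin.ext_iff, Fin.val_natCast]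
        have e1 : k % (p * q) % p = k % p := Nat.mod_mod_of_dvd k (dvd_mul_right p q)
        have e2 : k % p = a % p := hk1
        have e3 : a % p = a := Nat.mod_eq_of_lt (r' - r).isLt
        rw [e1, e2, e3]
      rw [this]; ring
    · have : ((k % (p * q) : ℕ) : Fin q) = s' - s := by
        rw [Fin.ext_iff, Fin.val_natCast]
        have e1 : k % (p * q) % q = k % q := Nat.mod_mod_of_dvd k (dvd_mul_left q p)
        have e2 : k % q = b % q := hk2
        have e3 : b % q = b := Nat.mod_eq_of_lt (s' - s).isLt
        rw [e1, e2, e3]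
      rw [this]; ring
end

lemma g_odd {n : ℕ} (h : n % 2 = 1) : 4 * g n + 1 = n * n := by
  obtain ⟨m, rfl⟩ : ∃ m, n = 2 * m + 1 := ⟨n / 2, by omega⟩
  have h2 : (2 * m + 1) ^ 2 = 4 * (m * m + m) + 1 := by ring
  have h3 : (2 * m + 1) * (2 * m + 1) = 4 * (m * m + m) + 1 := by ring
  rw [g, if_pos h, h2, h3]
  omega

lemma g_mod4 {n : ℕ} (h : n % 4 = 0) (hn : 4 ≤ n) : 4 * g n + 4 = n * n := by
  obtain ⟨m, rfl⟩ : ∃ m, n = 4 * m := ⟨n / 4, by omega⟩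
  have h2 : (4 * m) ^ 2 = 4 * (4 * (m * m)) := by ring
  have h3 : (4 * m) * (4 * m) = 4 * (4 * (m * m)) := by ring
  have hm : 1 ≤ m * m := by nlinarith
  rw [g, if_neg (by omega), if_pos (by omega), h2, h3]
  omega

lemma g_mod2 {n : ℕ} (h : n % 4 = 2) (hn : 6 ≤ n) : 4 * g n + 16 = n * n := by
  obtain ⟨m, rfl⟩ : ∃ m, n = 4 * m + 2 := ⟨n / 4, by omega⟩
  have h2 : (4 * m + 2) ^ 2 = 4 * (4 * (m * m) + 4 * m + 1) := by ring
  have h3 : (4 * m + 2) * (4 * m + 2) = 4 * (4 * (m * m) + 4 * m + 1) := by ring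
  have hm : 1 ≤ m * m := by nlinarith
  rw [g, if_neg (by omega), if_neg (by omega), h2, h3]
  omega

lemma g_up {n : ℕ} (hn : 7 ≤ n) : n * n ≤ 4 * g n + 16 := by
  have hc : n % 2 = 1 ∨ n % 4 = 0 ∨ n % 4 = 2 := by omega
  rcases hc with h | h | h
  · have := g_odd h; omega
  · have := g_mod4 h (by omega); omega
  · have := g_mod2 h (by omega); omega

lemma pair_eq {p q a b : ℕ} (h : ({p, q} : Finset ℕ) = {a, b}) :
    (p = a ∨ p = b) ∧ (q = a ∨ q = b) := by
  constructor
  · have hm : p ∈ ({p, q} : Finset ℕ) := Finset.mem_insert_self _ _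
    rw [h] at hm; simpa using hm
  · have hm : q ∈ ({p, q} : Finset ℕ) := by simp
    rw [h] at hm; simpa using hm

lemma starcond_comm {n p q : ℕ} (h : StarCond n p q) : StarCond n q p := by
  obtain ⟨h1, h2⟩ := h
  refine ⟨by omega, ?_⟩
  rwa [Finset.pair_comm q p]

lemma star_coprime {p q : ℕ} (hp : 0 < p) (hn : 7 ≤ p + q) (hs : StarCond (p + q) p q) :
    Nat.gcd p q = 1 := by
  obtain ⟨G, hG⟩ : ∃ G, Nat.gcd p q = G := ⟨_, rfl⟩
  have hdp : G ∣ p := hG ▸ Nat.gcd_dvd_left _ _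
  have hdq : G ∣ q := hG ▸ Nat.gcd_dvd_right _ _
  have hdsub : G ∣ (p - q) := Nat.dvd_sub hdp hdq
  have hdsub' : G ∣ (q - p) := Nat.dvd_sub hdq hdp
  have hge : 1 ≤ G := hG ▸ Nat.gcd_pos_of_pos_left q hp
  rw [hG]
  obtain ⟨-, h⟩ := hs
  rcases h with ⟨hm, hpq⟩ | ⟨hm, hpq⟩ | ⟨hm, hpq⟩ <;> obtain ⟨h1, h2⟩ := pair_eq hpq
  · have hd : G ∣ 1 := by
      rcases h1 with h1 | h1
      · rw [show (1:ℕ) = p - q by omega]; exact hdsub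
      · rw [show (1:ℕ) = q - p by omega]; exact hdsub'
    have hle : G ≤ 1 := Nat.le_of_dvd (by norm_num) hd
    interval_cases G <;> omega
  · have hd : G ∣ 2 := by
      rcases h1 with h1 | h1
      · rw [show (2:ℕ) = p - q by omega]; exact hdsub
      · rw [show (2:ℕ) = q - p by omega]; exact hdsub'
    have hpodd : p % 2 = 1 := by rcases h1 with h1 | h1 <;> omega
    have hle : G ≤ 2 := Nat.le_of_dvd (by norm_num) hd
    rcases hdp with ⟨c, hc⟩
    interval_cases G <;> omega
  · have hd : G ∣ 4 := by
      rcases h1 with h1 | h1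
      · rw [show (4:ℕ) = p - q by omega]; exact hdsub
      · rw [show (4:ℕ) = q - p by omega]; exact hdsub'
    have hpodd : p % 2 = 1 := by rcases h1 with h1 | h1 <;> omega
    have hle : G ≤ 4 := Nat.le_of_dvd (by norm_num) hd
    rcases hdp with ⟨c, hc⟩
    rcases hd with ⟨e, he⟩
    interval_cases G <;> omega

lemma key_ordered (q r : ℕ) (hq : 0 < q) (hn : 7 ≤ 2 * q + r) :
    Nat.lcm (q + r) q ≤ g (2 * q + r) ∧
      (Nat.lcm (q + r) q = g (2 * q + r) ↔ StarCond (2 * q + r) (q + r) q) := by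
  have hGL : Nat.gcd (q + r) q * Nat.lcm (q + r) q = (q + r) * q := Nat.gcd_mul_lcm _ _
  obtain ⟨G, hG⟩ : ∃ G, Nat.gcd (q + r) q = G := ⟨_, rfl⟩
  obtain ⟨L, hL⟩ : ∃ L, Nat.lcm (q + r) q = L := ⟨_, rfl⟩
  rw [hG, hL] at hGL
  rw [hL]
  have hG1 : 1 ≤ G := hG ▸ Nat.gcd_pos_of_pos_right _ hq
  have hid : 4 * ((q + r) * q) + r * r = (2 * q + r) * (2 * q + r) := by ring
  -- star ↔ small r
  have hstar_iff : StarCond (2 * q + r) (q + r) q ↔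
      (((2 * q + r) % 2 = 1 ∧ r = 1) ∨ ((2 * q + r) % 4 = 0 ∧ r = 2) ∨
        ((2 * q + r) % 4 = 2 ∧ r = 4)) := by
    constructor
    · rintro ⟨-, h⟩
      rcases h with ⟨hm, hpq⟩ | ⟨hm, hpq⟩ | ⟨hm, hpq⟩ <;> obtain ⟨h1, h2⟩ := pair_eq hpq
      · exact Or.inl ⟨hm, by omega⟩
      · exact Or.inr (Or.inl ⟨hm, by omega⟩)
      · exact Or.inr (Or.inr ⟨hm, by omega⟩)
    · rintro (⟨hm, hr⟩ | ⟨hm, hr⟩ | ⟨hm, hr⟩)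
      · refine ⟨by omega, Or.inl ⟨hm, ?_⟩⟩
        rw [show (2 * q + r + 1) / 2 = q + r by omega, show (2 * q + r - 1) / 2 = q by omega]
      · refine ⟨by omega, Or.inr (Or.inl ⟨hm, ?_⟩)⟩
        rw [show (2 * q + r + 2) / 2 = q + r by omega, show (2 * q + r - 2) / 2 = q by omega]
      · refine ⟨by omega, Or.inr (Or.inr ⟨hm, ?_⟩)⟩
        rw [show (2 * q + r + 4) / 2 = q + r by omega, show (2 * q + r - 4) / 2 = q by omega]
  by_cases hGc : G = 1
  · -- coprime case
    have hLpq : L = (q + r) * q := by rw [← hGL, hGc, one_mul]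
    have hpar : ¬ ((q + r) % 2 = 0 ∧ q % 2 = 0) := by
      rintro ⟨h1, h2⟩
      have h2d : (2 : ℕ) ∣ G := hG ▸ Nat.dvd_gcd (by omega) (by omega)
      omega
    have hr0 : r ≠ 0 := by
      rintro rfl
      have hGq : G = q := by rw [← hG]; simp
      omega
    have hcase : (2 * q + r) % 2 = 1 ∨ (2 * q + r) % 4 = 0 ∨ (2 * q + r) % 4 = 2 := by omega
    rcases hcase with hc | hc | hc
    · -- n odd, r odd ≥ 1
      have hg := g_odd hc
      have hrodd : r % 2 = 1 := by omega
      have hrr1 : 1 ≤ r * r := Nat.mul_pos (by omega) (by omega)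
      have hrr9 : 3 ≤ r → 9 ≤ r * r := fun h => le_trans (by norm_num) (Nat.mul_le_mul h h)
      constructor
      · omega
      · rw [hstar_iff]
        constructor
        · intro hEq
          refine Or.inl ⟨hc, ?_⟩
          by_contra hr1
          have h3 : 3 ≤ r := by omega
          have := hrr9 h3
          omega
        · rintro (⟨-, hr⟩ | ⟨hm, -⟩ | ⟨hm, -⟩)
          · subst hr; omega
          · omega
          · omega
    · -- n ≡ 0 mod 4
      have hg := g_mod4 hc (by omega)
      have hpodd : (q + r) % 2 = 1 := by omega
      have hr2 : 2 ≤ r ∧ r % 2 = 0 := by omega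
      have hrr4 : 4 ≤ r * r := le_trans (by norm_num) (Nat.mul_le_mul hr2.1 hr2.1)
      have hrr16 : 4 ≤ r → 16 ≤ r * r := fun h => le_trans (by norm_num) (Nat.mul_le_mul h h)
      constructor
      · omega
      · rw [hstar_iff]
        constructor
        · intro hEq
          refine Or.inr (Or.inl ⟨hc, ?_⟩)
          by_contra hr1
          have h4 : 4 ≤ r := by omega
          have := hrr16 h4
          omega
        · rintro (⟨hm, -⟩ | ⟨-, hr⟩ | ⟨hm, -⟩)
          · omega
          · subst hr; omega
          · omega
    · -- n ≡ 2 mod 4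
      have hg := g_mod2 hc (by omega)
      have hpodd : (q + r) % 2 = 1 := by omega
      have hr4 : 4 ≤ r ∧ r % 4 = 0 := by omega
      have hrr16 : 16 ≤ r * r := le_trans (by norm_num) (Nat.mul_le_mul hr4.1 hr4.1)
      have hrr64 : 8 ≤ r → 64 ≤ r * r := fun h => le_trans (by norm_num) (Nat.mul_le_mul h h)
      constructor
      · omega
      · rw [hstar_iff]
        constructor
        · intro hEq
          refine Or.inr (Or.inr ⟨hc, ?_⟩)
          by_contra hr1
          have h8 : 8 ≤ r := by omega
          have := hrr64 h8
          omega
        · rintro (⟨hm, -⟩ | ⟨hm, -⟩ | ⟨-, hr⟩)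
          · omega
          · omega
          · subst hr; omega
  · -- G ≥ 2
    have hG2 : 2 ≤ G := by omega
    have h2L : 2 * L ≤ (q + r) * q := by
      calc 2 * L ≤ G * L := Nat.mul_le_mul_right L hG2
      _ = (q + r) * q := hGL
    have hnn : 49 ≤ (2 * q + r) * (2 * q + r) := le_trans (by norm_num : (49:ℕ) ≤ 7 * 7)
      (Nat.mul_le_mul (show 7 ≤ 2 * q + r by omega) (show 7 ≤ 2 * q + r by omega))
    have hup := g_up hn
    have hLlt : L < g (2 * q + r) := by omega
    refine ⟨by omega, ?_, ?_⟩
    · intro h; omega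
    · intro hs
      exfalso
      have hs' : StarCond ((q + r) + q) (q + r) q := by
        rw [show (q + r) + q = 2 * q + r by ring]; exact hs
      have := star_coprime (by omega) (by omega) hs'
      omega

lemma key (p q : ℕ) (hp : 0 < p) (hq : 0 < q) (hn : 7 ≤ p + q) :
    Nat.lcm p q ≤ g (p + q) ∧ (Nat.lcm p q = g (p + q) ↔ StarCond (p + q) p q) := by
  rcases le_total q p with h | h
  · obtain ⟨r, rfl⟩ : ∃ r, p = q + r := ⟨p - q, by omega⟩
    have hk := key_ordered q r hq (by omega)
    rw [show q + r + q = 2 * q + r by ring]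
    exact hk
  · obtain ⟨r, rfl⟩ : ∃ r, q = p + r := ⟨q - p, by omega⟩
    have hk := key_ordered p r hp (by omega)
    rw [show p + (p + r) = 2 * p + r by ring, Nat.lcm_comm]
    exact ⟨hk.1, hk.2.trans ⟨starcond_comm, starcond_comm⟩⟩

theorem stmt_10 (p q : ℕ) (hp : 0 < p) (hq : 0 < q) (hn : 7 ≤ p + q)
    (X : Matrix (Fin p) (Fin q) ℕ) (hX : IsZO X) (hX0 : X ≠ 0) :
    theta (Matrix.fromBlocks (Cmat p) X 0 (Cmat q)) = (g (p + q) : ℕ∞) ↔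
      (∃! ij : Fin p × Fin q, X ij.1 ij.2 ≠ 0) ∧ StarCond (p + q) p q := by
  haveI : NeZero p := ⟨hp.ne'⟩
  haveI : NeZero q := ⟨hq.ne'⟩
  have hlcm := coll_lcm X hX0
  have hne : ∃ d, 1 ≤ d ∧ Coll X d := ⟨_, hlcm.1, hlcm.2⟩
  rw [theta_eq_sInf X hX hne]
  rw [Nat.cast_inj]
  have hd0_le : sInf {d : ℕ | 1 ≤ d ∧ Coll X d} ≤ Nat.lcm p q :=
    Nat.sInf_le ⟨hlcm.1, hlcm.2⟩
  have hkey := key p q hp hq hn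
  constructor
  · intro h
    have hLg : Nat.lcm p q = g (p + q) := le_antisymm hkey.1 (h ▸ hd0_le)
    have hstar := hkey.2.mp hLg
    refine ⟨?_, hstar⟩
    obtain ⟨r, s, hrs⟩ := exists_one X hX0
    refine ⟨(r, s), hrs, ?_⟩
    rintro ⟨r', s'⟩ h2
    by_contra hneq
    have hcop : Nat.Coprime p q := star_coprime hp hn hstar
    obtain ⟨d, hd1, hdlt, hcd⟩ := coll_two X hcop r' s' r s h2 hrs (by simpa using hneq)
    have hled : sInf {d : ℕ | 1 ≤ d ∧ Coll X d} ≤ d := Nat.sInf_le ⟨hd1, hcd⟩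
    have hL : Nat.lcm p q = p * q := hcop.lcm_eq_mul
    omega
  · rintro ⟨huniq, hstar⟩
    have hge : Nat.lcm p q ≤ sInf {d : ℕ | 1 ≤ d ∧ Coll X d} := by
      have hmem := Nat.sInf_mem hne
      obtain ⟨hdp, hdq⟩ := coll_unique_dvd X huniq _ hmem.2
      exact Nat.le_of_dvd hmem.1 (Nat.lcm_dvd hdp hdq)
    have heq : sInf {d : ℕ | 1 ≤ d ∧ Coll X d} = Nat.lcm p q :=
      le_antisymm hd0_le hge
    rw [heq]
    exact hkey.2.mpr hstar
end

section
/- Let p and q be relatively prime positive integers and let X be a p×q 0-1 matrix with at least two nonzero entries. Then the (p+q)×(p+q) block matrix B = [[C_p, X],[0, C_q]] satisfies: B^{pq} has an entry greater than 1; in particular B^{pq} is not a 0-1 matrix and θ(B) < pq. -/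
/-!
`C_n` is the permutation matrix of the rotation `i ↦ i + 1` of `Fin n`. The upper right block of
`B ^ (p * q)` is `∑_{i < pq} C_p ^ i * X * C_q ^ (pq - 1 - i)`, whose `(a, b)` entry is therefore
`∑_{i < pq} X (a + i) (b + 1 + i)`, indices taken mod `p` and mod `q`. By the Chinese remainder
theorem `i ↦ (a + i, b + 1 + i)` is a bijection from `{0, …, pq - 1}` onto `Fin p × Fin q`, so
every entry of that block is the sum of all entries of `X`, which is at least `2`.
-/

open Matrix Equiv

theorem val_finRotate (n : ℕ) (x : Fin n) : (finRotate n x : ℕ) = (x + 1) % n := by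
  have := x.neZero
  rw [finRotate_apply, Fin.val_add, Fin.val_one', Nat.add_mod_mod]

theorem val_finRotate_pow (n k : ℕ) (x : Fin n) : ((finRotate n ^ k) x : ℕ) = (x + k) % n := by
  induction k with
  | zero => simp [Nat.mod_eq_of_lt x.isLt]
  | succ k ih => rw [pow_succ', Perm.mul_apply, val_finRotate, ih, Nat.mod_add_mod, add_assoc]

theorem finRotate_pow_self (n : ℕ) : finRotate n ^ n = 1 := by
  ext x
  rw [val_finRotate_pow, Nat.add_mod_right, Nat.mod_eq_of_lt x.isLt, Perm.one_apply]

theorem Cmat_eq_permMatrix (n : ℕ) : Cmat n = (finRotate n).permMatrix ℕ := by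
  ext i j
  simp only [Cmat, of_apply, PEquiv.toMatrix_apply, toPEquiv_apply, Option.mem_def,
    Option.some_inj, Fin.ext_iff, val_finRotate, eq_comm]

theorem Cmat_pow_s14 (n k : ℕ) : Cmat n ^ k = (finRotate n ^ k).permMatrix ℕ := by
  have h : Cmat n =
      (permMatrixHom : Perm (Fin n) →* Matrix (Fin n) (Fin n) ℕ) (finRotate n)⁻¹ := by
    rw [permMatrixHom_apply, inv_inv, Cmat_eq_permMatrix]
  rw [h, ← map_pow, permMatrixHom_apply, inv_pow, inv_inv]

theorem Cmat_pow_mul_mul_Cmat_pow {p q : ℕ} (X : Matrix (Fin p) (Fin q) ℕ) (i j : ℕ) :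
    Cmat p ^ i * X * Cmat q ^ j = X.submatrix ⇑(finRotate p ^ i) ⇑(finRotate q ^ j)⁻¹ := by
  rw [Cmat_pow_s14, Cmat_pow_s14, PEquiv.toMatrix_toPEquiv_mul, PEquiv.mul_toMatrix_toPEquiv]
  rfl

theorem Matrix.fromBlocks_zero₂₁_pow {l m α : Type*} [Fintype l] [Fintype m] [DecidableEq l]
    [DecidableEq m] [Semiring α] (A : Matrix l l α) (B : Matrix l m α) (D : Matrix m m α)
    (k : ℕ) :
    fromBlocks A B 0 D ^ k =
      fromBlocks (A ^ k) (∑ i ∈ Finset.range k, A ^ i * B * D ^ (k - 1 - i)) 0 (D ^ k) := by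
  induction k with
  | zero => simp [fromBlocks_one]
  | succ k ih =>
    rw [pow_succ', ih, fromBlocks_multiply, Finset.sum_range_succ', Matrix.mul_sum]
    simp only [Matrix.mul_zero, Matrix.zero_mul, add_zero, zero_add, pow_zero, Matrix.one_mul,
      ← pow_succ', Nat.add_sub_cancel, Nat.sub_zero, ← Matrix.mul_assoc]
    congr 2
    exact Finset.sum_congr rfl fun i _ => by rw [Nat.sub_sub, Nat.add_comm 1 i]

theorem injective_finRotate_pow_pair {p q : ℕ} (hpq : p.Coprime q) (a : Fin p) (b : Fin q) :
    Function.Injective fun i : Fin (p * q) =>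
      ((finRotate p ^ (i : ℕ)) a, (finRotate q ^ (i : ℕ)) b) := by
  intro i j hij
  simp only [Prod.ext_iff, Fin.ext_iff, val_finRotate_pow] at hij
  have hp : (i : ℕ) ≡ j [MOD p] := Nat.ModEq.add_left_cancel' (a : ℕ) hij.1
  have hq : (i : ℕ) ≡ j [MOD q] := Nat.ModEq.add_left_cancel' (b : ℕ) hij.2
  exact Fin.ext <|
    ((Nat.modEq_and_modEq_iff_modEq_mul hpq).mp ⟨hp, hq⟩).eq_of_lt_of_lt i.isLt j.isLt

theorem sum_finRotate_pow_pair {M : Type*} [AddCommMonoid M] {p q : ℕ} (hpq : p.Coprime q)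
    (a : Fin p) (b : Fin q) (f : Fin p → Fin q → M) :
    ∑ i ∈ Finset.range (p * q), f ((finRotate p ^ i) a) ((finRotate q ^ i) b) =
      ∑ r, ∑ s, f r s := by
  have hbij := (Fintype.bijective_iff_injective_and_card _).mpr
    ⟨injective_finRotate_pow_pair hpq a b, by simp⟩
  rw [Finset.sum_range (fun i => f ((finRotate p ^ i) a) ((finRotate q ^ i) b)),
    ← Fintype.sum_prod_type']
  exact hbij.sum_comp (fun x => f x.1 x.2)

theorem finRotate_pow_sub_inv_apply {q : ℕ} (N i : ℕ) (hi : i < N) (hN : q ∣ N) (b : Fin q) :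
    (finRotate q ^ (N - 1 - i))⁻¹ b = (finRotate q ^ i) (finRotate q b) := by
  obtain ⟨c, rfl⟩ := hN
  have h : finRotate q ^ (q * c - 1 - i) * (finRotate q ^ i * finRotate q) = 1 := by
    rw [← pow_succ, ← pow_add, show q * c - 1 - i + (i + 1) = q * c by omega, pow_mul,
      finRotate_pow_self, one_pow]
  rw [inv_eq_of_mul_eq_one_right h, Perm.mul_apply]

theorem fromBlocks_Cmat_pow_mul_apply_inl_inr {p q : ℕ} (hpq : p.Coprime q)
    (X : Matrix (Fin p) (Fin q) ℕ) (a : Fin p) (b : Fin q) :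
    (fromBlocks (Cmat p) X 0 (Cmat q) ^ (p * q)) (Sum.inl a) (Sum.inr b) = ∑ r, ∑ s, X r s := by
  rw [fromBlocks_zero₂₁_pow, fromBlocks_apply₁₂, Matrix.sum_apply]
  refine (Finset.sum_congr rfl fun i hi => ?_).trans
    (sum_finRotate_pow_pair hpq a (finRotate q b) fun r s => X r s)
  rw [Cmat_pow_mul_mul_Cmat_pow, submatrix_apply,
    finRotate_pow_sub_inv_apply _ _ (Finset.mem_range.mp hi) (dvd_mul_left q p)]

theorem theta_lt_of_not_isZO_pow {α : Type*} [Fintype α] [DecidableEq α] {A : Matrix α α ℕ}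
    {N : ℕ} (hN : 2 ≤ N) (h : ¬ IsZO (A ^ N)) : theta A < N := by
  obtain ⟨k, rfl⟩ : ∃ k, N = k + 1 := ⟨N - 1, by omega⟩
  calc theta A ≤ k := sInf_le ⟨k, ⟨by omega, h⟩, rfl⟩
    _ < (k + 1 : ℕ) := by exact_mod_cast k.lt_succ_self

theorem stmt_14_general (p q : ℕ) (hpq : Nat.Coprime p q)
    (X : Matrix (Fin p) (Fin q) ℕ)
    (htwo : ∃ ij kl : Fin p × Fin q, ij ≠ kl ∧
      X ij.1 ij.2 ≠ 0 ∧ X kl.1 kl.2 ≠ 0) :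
    (∃ i j, 1 < ((Matrix.fromBlocks (Cmat p) X 0 (Cmat q)) ^ (p * q)) i j) ∧
    ¬ IsZO ((Matrix.fromBlocks (Cmat p) X 0 (Cmat q)) ^ (p * q)) ∧
    theta (Matrix.fromBlocks (Cmat p) X 0 (Cmat q)) < (p * q : ℕ∞) := by
  obtain ⟨ij, kl, hne, hij, hkl⟩ := htwo
  have hentry : 1 < (fromBlocks (Cmat p) X 0 (Cmat q) ^ (p * q)) (.inl ij.1) (.inr ij.2) := by
    rw [fromBlocks_Cmat_pow_mul_apply_inl_inr hpq, ← Fintype.sum_prod_type' fun r s => X r s]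
    have := Finset.add_le_sum (fun x _ => Nat.zero_le (X x.1 x.2)) (Finset.mem_univ ij)
      (Finset.mem_univ kl) hne
    omega
  have hnot : ¬ IsZO (fromBlocks (Cmat p) X 0 (Cmat q) ^ (p * q)) :=
    fun h => (h _ _).not_gt hentry
  have hcard : 2 ≤ p * q := by
    have : Nontrivial (Fin p × Fin q) := nontrivial_of_ne ij kl hne
    simpa [Nat.succ_le_iff] using Fintype.one_lt_card (α := Fin p × Fin q)
  exact ⟨⟨_, _, hentry⟩, hnot, by exact_mod_cast theta_lt_of_not_isZO_pow hcard hnot⟩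

theorem stmt_14 (p q : ℕ) (hp : 0 < p) (hq : 0 < q) (hpq : Nat.Coprime p q)
    (X : Matrix (Fin p) (Fin q) ℕ) (hX : IsZO X)
    (htwo : ∃ ij kl : Fin p × Fin q, ij ≠ kl ∧
      X ij.1 ij.2 ≠ 0 ∧ X kl.1 kl.2 ≠ 0) :
    (∃ i j, 1 < ((Matrix.fromBlocks (Cmat p) X 0 (Cmat q)) ^ (p * q)) i j) ∧
    ¬ IsZO ((Matrix.fromBlocks (Cmat p) X 0 (Cmat q)) ^ (p * q)) ∧
    theta (Matrix.fromBlocks (Cmat p) X 0 (Cmat q)) < (p * q : ℕ∞) :=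
  stmt_14_general p q hpq X htwo
end

section
/- Let H be the 10×10 block matrix [[C_4, u, 0],[0, 0, vᵀ],[0, 0, C_5]], where u is a nonzero 0-1 column vector of length 4 and v is a nonzero 0-1 column vector of length 5, and suppose u or v has more than one nonzero entry. Then H^{21} has an entry greater than 1; in particular θ(H) ≤ 20 < g(10). -/
/-- The block matrix `[[C_p, u, 0], [0, 0, vᵀ], [0, 0, C_q]]`. -/
def Hmat (p q : ℕ) (u : Fin p → ℕ) (v : Fin q → ℕ) :
    Matrix (Fin p ⊕ Unit ⊕ Fin q) (Fin p ⊕ Unit ⊕ Fin q) ℕ :=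
  Matrix.of fun i j =>
    match i, j with
    | Sum.inl a, Sum.inl b => Cmat p a b
    | Sum.inl a, Sum.inr (Sum.inl _) => u a
    | Sum.inr (Sum.inl _), Sum.inr (Sum.inr b) => v b
    | Sum.inr (Sum.inr a), Sum.inr (Sum.inr b) => Cmat q a b
    | _, _ => 0

/-!
Walks in the digraph of `Hmat p q u v` from the `p`-cycle to the `q`-cycle cross the middle
vertex exactly once, so an entry of its `(k + 1)`-st power from the `p`-block to the `q`-block
is a sum over the position `i < k` of that crossing. For `k = p * q` with `p`, `q` coprime, the
Chinese remainder theorem makes the pair (tail of the `u`-edge, head of the `v`-edge) run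
through `Fin p × Fin q` exactly once, so the entry is `(∑ u) * (∑ v)`.
-/

open Fin.CommRing in
lemma sum_range_mul_mul_eq_sum_mul_sum {M : Type*} [CommSemiring M] {p q : ℕ} [NeZero p]
    [NeZero q] (hpq : p.Coprime q) (u : Fin p → M) (v : Fin q → M) (a : Fin p) (c : Fin q) :
    ∑ i ∈ Finset.range (p * q), u (a + i) * v (c + i) = (∑ x, u x) * ∑ y, v y := by
  set φ : ℕ → Fin p × Fin q := fun i => (a + i, c + i)
  have hinj : Set.InjOn φ (Finset.range (p * q)) := by
    intro i hi j hj hij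
    simp only [φ, Prod.mk.injEq, add_right_inj, Fin.ext_iff, Fin.val_natCast] at hij
    exact Nat.ModEq.eq_of_lt_of_lt ((Nat.modEq_and_modEq_iff_modEq_mul hpq).1 hij)
      (Finset.mem_range.1 hi) (Finset.mem_range.1 hj)
  have himage : (Finset.range (p * q)).image φ = Finset.univ :=
    Finset.eq_univ_of_card _ (by simp [Finset.card_image_of_injOn hinj])
  rw [Fintype.sum_mul_sum, ← Fintype.sum_prod_type', ← himage, Finset.sum_image hinj]

lemma two_le_sum_of_ne {ι : Type*} [Fintype ι] {f : ι → ℕ} {a b : ι} (hab : a ≠ b)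
    (ha : f a ≠ 0) (hb : f b ≠ 0) : 2 ≤ ∑ i, f i := by
  classical
  calc 2 ≤ f a + f b := by omega
    _ = ∑ i ∈ {a, b}, f i := (Finset.sum_pair hab).symm
    _ ≤ ∑ i, f i := Finset.sum_le_sum_of_subset (Finset.subset_univ _)

lemma one_le_sum_of_ne_zero {ι : Type*} [Fintype ι] {f : ι → ℕ} (hf : f ≠ 0) :
    1 ≤ ∑ i, f i := by
  obtain ⟨a, ha⟩ := Function.ne_iff.1 hf
  exact (Nat.one_le_iff_ne_zero.2 ha).trans (Finset.single_le_sum (by simp) (Finset.mem_univ a))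

lemma theta_le_of_not_isZO {α : Type*} [Fintype α] [DecidableEq α] (A : Matrix α α ℕ) {k : ℕ}
    (hk : 1 ≤ k) (h : ¬IsZO (A ^ (k + 1))) : theta A ≤ k :=
  sInf_le ⟨k, ⟨hk, h⟩, rfl⟩

section Hmat

open Fin.CommRing

variable {p q : ℕ} (u : Fin p → ℕ) (v : Fin q → ℕ)

lemma Cmat_apply {n : ℕ} [NeZero n] (i j : Fin n) :
    Cmat n i j = if j = i + 1 then 1 else 0 := by
  simp only [Cmat, Matrix.of_apply, Fin.ext_iff, Fin.val_add, Fin.val_one', Nat.add_mod_mod]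

lemma Hmat_mul_apply_unit (B : Matrix (Fin p ⊕ Unit ⊕ Fin q) (Fin p ⊕ Unit ⊕ Fin q) ℕ)
    (c : Fin p ⊕ Unit ⊕ Fin q) :
    (Hmat p q u v * B) (.inr (.inl ())) c = ∑ b, v b * B (.inr (.inr b)) c := by
  simp [Matrix.mul_apply, Fintype.sum_sum_type, Hmat]

variable [NeZero p] [NeZero q]

lemma Hmat_mul_apply_inl (B : Matrix (Fin p ⊕ Unit ⊕ Fin q) (Fin p ⊕ Unit ⊕ Fin q) ℕ)
    (a : Fin p) (c : Fin p ⊕ Unit ⊕ Fin q) :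
    (Hmat p q u v * B) (.inl a) c = B (.inl (a + 1)) c + u a * B (.inr (.inl ())) c := by
  simp [Matrix.mul_apply, Fintype.sum_sum_type, Hmat, Cmat_apply, ite_mul]

lemma Hmat_mul_apply_inr (B : Matrix (Fin p ⊕ Unit ⊕ Fin q) (Fin p ⊕ Unit ⊕ Fin q) ℕ)
    (s : Fin q) (c : Fin p ⊕ Unit ⊕ Fin q) :
    (Hmat p q u v * B) (.inr (.inr s)) c = B (.inr (.inr (s + 1))) c := by
  simp [Matrix.mul_apply, Fintype.sum_sum_type, Hmat, Cmat_apply, ite_mul]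

lemma Hmat_pow_apply_inr_inr (k : ℕ) (s t : Fin q) :
    (Hmat p q u v ^ k) (.inr (.inr s)) (.inr (.inr t)) = if s + (k : Fin q) = t then 1 else 0 := by
  induction k generalizing s with
  | zero => simp [Matrix.one_apply]
  | succ k ih => rw [pow_succ', Hmat_mul_apply_inr, ih, Nat.cast_succ, add_right_comm, add_assoc]

lemma Hmat_pow_succ_apply_unit_inr (k : ℕ) (t : Fin q) :
    (Hmat p q u v ^ (k + 1)) (.inr (.inl ())) (.inr (.inr t)) = v (t - k) := by
  simp [pow_succ', Hmat_mul_apply_unit, Hmat_pow_apply_inr_inr, ← eq_sub_iff_add_eq]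

lemma Hmat_pow_succ_apply_inl_inr (k : ℕ) (a : Fin p) (t : Fin q) :
    (Hmat p q u v ^ (k + 1)) (.inl a) (.inr (.inr t))
      = ∑ i ∈ Finset.range k, u (a + i) * v (t + 1 - k + i) := by
  induction k generalizing a with
  | zero => simp [Hmat]
  | succ k ih =>
    rw [pow_succ', Hmat_mul_apply_inl, ih, Hmat_pow_succ_apply_unit_inr, Finset.sum_range_succ']
    congr 1
    · refine Finset.sum_congr rfl fun i _ => ?_
      push_cast
      ring_nf
    · push_cast
      ring_nf

lemma Hmat_pow_apply_inl_inr_of_coprime (hpq : p.Coprime q) (a : Fin p) (t : Fin q) :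
    (Hmat p q u v ^ (p * q + 1)) (.inl a) (.inr (.inr t)) = (∑ x, u x) * ∑ y, v y := by
  rw [Hmat_pow_succ_apply_inl_inr, sum_range_mul_mul_eq_sum_mul_sum hpq]

end Hmat

theorem stmt_17_general (u : Fin 4 → ℕ) (v : Fin 5 → ℕ)
    (hu0 : u ≠ 0) (hv0 : v ≠ 0)
    (hmulti : (∃ a b : Fin 4, a ≠ b ∧ u a ≠ 0 ∧ u b ≠ 0) ∨
              (∃ a b : Fin 5, a ≠ b ∧ v a ≠ 0 ∧ v b ≠ 0)) :
    (∃ i j, 1 < ((Hmat 4 5 u v) ^ 21) i j) ∧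
    theta (Hmat 4 5 u v) ≤ (20 : ℕ∞) ∧ 20 < g 10 := by
  have hentry : (Hmat 4 5 u v ^ 21) (.inl 0) (.inr (.inr 0)) = (∑ x, u x) * ∑ y, v y :=
    Hmat_pow_apply_inl_inr_of_coprime u v (by norm_num) 0 0
  have hu := one_le_sum_of_ne_zero hu0
  have hv := one_le_sum_of_ne_zero hv0
  have hgt : 1 < (Hmat 4 5 u v ^ 21) (.inl 0) (.inr (.inr 0)) := by
    rw [hentry]
    rcases hmulti with ⟨a, b, hab, ha, hb⟩ | ⟨a, b, hab, ha, hb⟩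
    · nlinarith [two_le_sum_of_ne hab ha hb]
    · nlinarith [two_le_sum_of_ne hab ha hb]
  refine ⟨⟨_, _, hgt⟩, ?_, by decide⟩
  exact_mod_cast theta_le_of_not_isZO _ (by norm_num : 1 ≤ 20) fun h => (h _ _).not_gt hgt

theorem stmt_17 (u : Fin 4 → ℕ) (v : Fin 5 → ℕ)
    (hu1 : ∀ a, u a ≤ 1) (hv1 : ∀ b, v b ≤ 1)
    (hu0 : u ≠ 0) (hv0 : v ≠ 0)
    (hmulti : (∃ a b : Fin 4, a ≠ b ∧ u a ≠ 0 ∧ u b ≠ 0) ∨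
              (∃ a b : Fin 5, a ≠ b ∧ v a ≠ 0 ∧ v b ≠ 0)) :
    (∃ i j, 1 < ((Hmat 4 5 u v) ^ 21) i j) ∧
    theta (Hmat 4 5 u v) ≤ (20 : ℕ∞) ∧ 20 < g 10 :=
  stmt_17_general u v hu0 hv0 hmulti
end

section
/- Let p, q be positive integers and let H be the (p+q+1)×(p+q+1) block matrix [[C_p, u, 0],[0, 0, vᵀ],[0, 0, C_q]], where u is a nonzero 0-1 column vector of length p and v is a nonzero 0-1 column vector of length q. Then H^{lcm(p,q)+2} has an entry greater than 1; in particular θ(H) ≤ lcm(p,q) + 1. -/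
/-!
Pick `a` with `u a ≠ 0` and `b` with `v b ≠ 0`; write `m` for the middle vertex and `L = lcm(p, q)`.
In the digraph of `H` there are two different walks of length `L + 2` from `a` to `b`: go
`a → m → b` and then once around the `q`-cycle (`L` steps, since `q ∣ L`), or step to `a + 1`,
return to `a` along the `p`-cycle in `L - 1` steps (since `p ∣ L`) and then go `a → m → b`.
Hence the entry `(a, b)` of `H ^ (L + 2)` is at least `2`.
-/

namespace Matrix

variable {l m n : Type*} [Fintype m]

lemma one_le_mul_apply {A : Matrix l m ℕ} {B : Matrix m n ℕ} {i : l} {k : m} {j : n}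
    (hA : 1 ≤ A i k) (hB : 1 ≤ B k j) : 1 ≤ (A * B) i j :=
  calc 1 ≤ A i k * B k j := Nat.mul_le_mul hA hB
    _ ≤ ∑ x, A i x * B x j :=
      Finset.single_le_sum (f := fun x => A i x * B x j) (fun _ _ => Nat.zero_le _)
        (Finset.mem_univ k)

lemma two_le_mul_apply_of_ne {A : Matrix l m ℕ} {B : Matrix m n ℕ} {i : l} {k k' : m} {j : n}
    (hk : k ≠ k') (hA : 1 ≤ A i k) (hB : 1 ≤ B k j) (hA' : 1 ≤ A i k') (hB' : 1 ≤ B k' j) :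
    2 ≤ (A * B) i j := by
  classical
  calc 2 ≤ A i k * B k j + A i k' * B k' j :=
        add_le_add (Nat.mul_le_mul hA hB) (Nat.mul_le_mul hA' hB')
    _ = ∑ x ∈ {k, k'}, A i x * B x j := (Finset.sum_pair (f := fun x => A i x * B x j) hk).symm
    _ ≤ ∑ x, A i x * B x j := Finset.sum_le_sum_of_subset (Finset.subset_univ _)

lemma one_le_pow_apply_of_chain [DecidableEq m] {A : Matrix m m ℕ} (f : ℕ → m)
    (hf : ∀ t, 1 ≤ A (f t) (f (t + 1))) (s : ℕ) : ∀ t, 1 ≤ (A ^ t) (f s) (f (s + t))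
  | 0 => by simp
  | t + 1 => by
    rw [pow_succ]
    exact one_le_mul_apply (one_le_pow_apply_of_chain f hf s t) (hf _)

end Matrix

open Matrix

lemma Fin.ofNat_add_of_dvd {p L : ℕ} [NeZero p] (h : p ∣ L) (s : ℕ) :
    Fin.ofNat p (s + L) = Fin.ofNat p s := by
  ext
  simp [Nat.add_mod, Nat.mod_eq_zero_of_dvd h]

lemma Cmat_apply_ofNat_succ (p : ℕ) [NeZero p] (t : ℕ) :
    Cmat p (Fin.ofNat p t) (Fin.ofNat p (t + 1)) = 1 := by
  simp [Cmat, Nat.add_mod]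

section Hmat

variable {p q : ℕ} (u : Fin p → ℕ) (v : Fin q → ℕ)

lemma one_le_Hmat_pow_inl [NeZero p] (s t : ℕ) :
    1 ≤ (Hmat p q u v ^ t) (.inl (Fin.ofNat p s)) (.inl (Fin.ofNat p (s + t))) :=
  one_le_pow_apply_of_chain (fun t => Sum.inl (Fin.ofNat p t))
    (fun t => (Cmat_apply_ofNat_succ p t).ge) s t

lemma one_le_Hmat_pow_inr [NeZero q] (s t : ℕ) :
    1 ≤ (Hmat p q u v ^ t) (.inr (.inr (Fin.ofNat q s))) (.inr (.inr (Fin.ofNat q (s + t)))) :=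
  one_le_pow_apply_of_chain (fun t => Sum.inr (Sum.inr (Fin.ofNat q t)))
    (fun t => (Cmat_apply_ofNat_succ q t).ge) s t

theorem two_le_Hmat_pow_apply [NeZero p] [NeZero q] {L : ℕ} (hpL : p ∣ L) (hqL : q ∣ L)
    (hL : 0 < L) {a : Fin p} {b : Fin q} (ha : u a ≠ 0) (hb : v b ≠ 0) :
    2 ≤ (Hmat p q u v ^ (L + 2)) (.inl a) (.inr (.inr b)) := by
  set H := Hmat p q u v
  have hua : 1 ≤ H (.inl a) (.inr (.inl ())) := Nat.one_le_iff_ne_zero.2 ha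
  have hvb : 1 ≤ H (.inr (.inl ())) (.inr (.inr b)) := Nat.one_le_iff_ne_zero.2 hb
  have viaMid : 1 ≤ (H ^ (L + 1)) (.inr (.inl ())) (.inr (.inr b)) := by
    rw [pow_succ']
    refine one_le_mul_apply hvb ?_
    have hcycle := one_le_Hmat_pow_inr u v b L
    rwa [Fin.ofNat_add_of_dvd hqL, Fin.ofNat_val_eq_self] at hcycle
  have viaCycle : 1 ≤ (H ^ (L + 1)) (.inl (Fin.ofNat p (a + 1))) (.inr (.inr b)) := by
    obtain ⟨L', rfl⟩ := Nat.exists_eq_succ_of_ne_zero hL.ne'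
    rw [pow_succ, pow_succ]
    refine one_le_mul_apply (one_le_mul_apply ?_ hua) hvb
    have hret : a + 1 + L' = a + (L' + 1) := by omega
    have hcycle := one_le_Hmat_pow_inl u v (a + 1) L'
    rwa [hret, Fin.ofNat_add_of_dvd hpL, Fin.ofNat_val_eq_self] at hcycle
  have hstep : 1 ≤ H (.inl a) (.inl (Fin.ofNat p (a + 1))) := by
    have hsucc := (Cmat_apply_ofNat_succ p a).ge
    rwa [Fin.ofNat_val_eq_self] at hsucc
  rw [pow_succ']
  exact two_le_mul_apply_of_ne (by simp) hua viaMid hstep viaCycle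

end Hmat

lemma theta_le_of_not_IsZO {α : Type*} [Fintype α] [DecidableEq α] {A : Matrix α α ℕ} {k : ℕ}
    (hk : 1 ≤ k) (h : ¬ IsZO (A ^ (k + 1))) : theta A ≤ k :=
  sInf_le ⟨k, ⟨hk, h⟩, rfl⟩

theorem stmt_18_general (p q : ℕ)
    (u : Fin p → ℕ) (v : Fin q → ℕ)
    (hu0 : u ≠ 0) (hv0 : v ≠ 0) :
    (∃ i j, 1 < ((Hmat p q u v) ^ (Nat.lcm p q + 2)) i j) ∧
    theta (Hmat p q u v) ≤ ((Nat.lcm p q + 1 : ℕ) : ℕ∞) := by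
  obtain ⟨a, ha⟩ := Function.ne_iff.mp hu0
  obtain ⟨b, hb⟩ := Function.ne_iff.mp hv0
  have : NeZero p := NeZero.of_pos a.pos
  have : NeZero q := NeZero.of_pos b.pos
  have key := two_le_Hmat_pow_apply u v (Nat.dvd_lcm_left p q) (Nat.dvd_lcm_right p q)
    (Nat.lcm_pos a.pos b.pos) ha hb
  exact ⟨⟨_, _, key⟩, theta_le_of_not_IsZO le_add_self fun h => (h _ _).not_gt key⟩

theorem stmt_18 (p q : ℕ) (hp : 0 < p) (hq : 0 < q)
    (u : Fin p → ℕ) (v : Fin q → ℕ)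
    (hu1 : ∀ a, u a ≤ 1) (hv1 : ∀ b, v b ≤ 1)
    (hu0 : u ≠ 0) (hv0 : v ≠ 0) :
    (∃ i j, 1 < ((Hmat p q u v) ^ (Nat.lcm p q + 2)) i j) ∧
    theta (Hmat p q u v) ≤ ((Nat.lcm p q + 1 : ℕ) : ℕ∞) :=
  stmt_18_general p q u v hu0 hv0
end
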